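/- If Γ_1, Γ_2 are sets with |Γ_1| > |Γ_2| ≥ ℵ_0 and 1 < p, r < ∞, then ℓ^{p,∞}(Γ_1,w_1) does not embed isomorphically into ℓ^{r,∞}(Γ_2,w_2) for any weights w_1, w_2; in particular the two spaces are not isomorphic whenever |Γ_1| ≠ |Γ_2|. -/

import Mathlib

/-!
Send each normalized unit vector `e_g` of `ℓ^{p,∞}(Γ₁)` through the embedding `T`: as `T e_g ≠ 0`,
there are a point `δ ∈ Γ₂` of positive weight and a rational `q > 0` with `q < |T e_g (δ)|`.
Since `|Γ₂ × ℚ| = |Γ₂| < |Γ₁|`, infinitely many `g` share the same pair `(δ, q)`. For `n` of them,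
the signed sum `x = ∑ ± e_g` has `‖x‖ ≤ n^{1/p}` (upper `p`-estimate), while the signs can be chosen
so that `|T x (δ)| > n q`, whence `‖T x‖ ≥ n q w₂(δ)^{1/r}`. Boundedness of `T` then forces
`n ≲ n^{1/p}`, which fails for large `n` because `p > 1`.
-/

open ENNReal

/-- The weak `ℓ^p` quasi-norm on a weighted set. -/
noncomputable def weakNorm {Γ : Type*} (p : ℝ) (w : Γ → ℝ) (x : Γ → ℝ) : ℝ≥0∞ :=
  ⨆ (c : ℝ) (_ : 0 < c),
    ENNReal.ofReal c * (∑' γ : {γ : Γ // c < |x γ|}, ENNReal.ofReal (w γ.1)) ^ ((1 : ℝ)/p)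

open Filter

section WeakNorm

variable {Γ : Type*}

lemma ofReal_mul_rpow_le_weakNorm {r : ℝ} (hr : 0 ≤ r) (w y : Γ → ℝ) {c : ℝ} (hc : 0 ≤ c)
    {δ : Γ} (hδ : c < |y δ|) :
    ENNReal.ofReal c * ENNReal.ofReal (w δ) ^ (1 / r) ≤ weakNorm r w y := by
  rcases hc.eq_or_lt with rfl | hc
  · simp
  refine le_trans ?_ (le_iSup₂ (f := fun (c : ℝ) (_ : 0 < c) =>
    ENNReal.ofReal c * (∑' γ : {γ : Γ // c < |y γ|}, ENNReal.ofReal (w γ.1)) ^ (1 / r)) c hc)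
  gcongr
  exact ENNReal.le_tsum (⟨δ, hδ⟩ : {γ : Γ // c < |y γ|})

lemma weakNorm_pos_iff {r : ℝ} (hr : 0 < r) (w y : Γ → ℝ) :
    0 < weakNorm r w y ↔ ∃ δ, 0 < w δ ∧ y δ ≠ 0 := by
  constructor
  · intro h
    obtain ⟨c, hc, hpos⟩ := by simpa [weakNorm, lt_iSup_iff] using h
    have hsum : ∑' γ : {γ : Γ // c < |y γ|}, ENNReal.ofReal (w γ) ≠ 0 := by
      intro h0
      simp [h0, ENNReal.zero_rpow_of_pos (inv_pos.2 hr)] at hpos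
    obtain ⟨⟨δ, hδ⟩, hwδ⟩ := not_forall.1 (mt ENNReal.tsum_eq_zero.2 hsum)
    exact ⟨δ, by simpa using hwδ, fun h => by simp [h] at hδ; linarith⟩
  · rintro ⟨δ, hwδ, hyδ⟩
    refine lt_of_lt_of_le ?_ (ofReal_mul_rpow_le_weakNorm hr.le w y (c := |y δ| / 2)
      (by positivity) (half_lt_self (abs_pos.2 hyδ)))
    exact ENNReal.mul_pos (by simpa using hyδ)
      (ENNReal.rpow_pos (by simpa using hwδ) ofReal_ne_top).ne'

lemma weakNorm_le_card_rpow {p : ℝ} (hp : 0 < p) (w x : Γ → ℝ) (t : Finset Γ)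
    (hx : ∀ γ, x γ ≠ 0 → γ ∈ t ∧ w γ ≤ |x γ| ^ (-p)) :
    weakNorm p w x ≤ (t.card : ℝ≥0∞) ^ (1 / p) := by
  refine iSup₂_le fun c hc => ?_
  have hlevel : ∀ γ, c < |x γ| → γ ∈ t ∧ w γ ≤ c ^ (-p) := by
    intro γ hγ
    obtain ⟨hγt, hwγ⟩ := hx γ (abs_pos.1 (hc.trans hγ))
    exact ⟨hγt, hwγ.trans (Real.rpow_le_rpow_of_nonpos hc hγ.le (by linarith))⟩
  have hmass : ∑' γ : {γ : Γ // c < |x γ|}, ENNReal.ofReal (w γ)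
      ≤ t.card * ENNReal.ofReal (c ^ (-p)) :=
    calc ∑' γ : {γ : Γ // c < |x γ|}, ENNReal.ofReal (w γ)
        ≤ ∑' _ : {γ : Γ // c < |x γ|}, ENNReal.ofReal (c ^ (-p)) :=
          ENNReal.tsum_le_tsum fun γ => ENNReal.ofReal_le_ofReal (hlevel γ γ.2).2
      _ ≤ ∑' _ : (t : Set Γ), ENNReal.ofReal (c ^ (-p)) :=
          ENNReal.tsum_mono_subtype (fun _ => _) fun γ hγ => (hlevel γ hγ).1
      _ = t.card * ENNReal.ofReal (c ^ (-p)) := by simp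
  calc ENNReal.ofReal c * (∑' γ : {γ : Γ // c < |x γ|}, ENNReal.ofReal (w γ)) ^ (1 / p)
      ≤ ENNReal.ofReal c * (t.card * ENNReal.ofReal (c ^ (-p))) ^ (1 / p) := by gcongr
    _ = (t.card : ℝ≥0∞) ^ (1 / p) := by
      rw [ENNReal.mul_rpow_of_nonneg _ _ (by positivity),
        ENNReal.ofReal_rpow_of_pos (by positivity), ← Real.rpow_mul hc.le,
        show -p * (1 / p) = -1 by field_simp, Real.rpow_neg_one, mul_left_comm,
        ← ENNReal.ofReal_mul hc.le, mul_inv_cancel₀ hc.ne', ENNReal.ofReal_one, mul_one]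

lemma exists_rat_lt_abs_of_weakNorm_pos {r : ℝ} (hr : 0 < r) {w y : Γ → ℝ}
    (h : 0 < weakNorm r w y) : ∃ z : Γ × ℚ, 0 < w z.1 ∧ 0 < (z.2 : ℝ) ∧ (z.2 : ℝ) < |y z.1| := by
  obtain ⟨δ, hwδ, hyδ⟩ := (weakNorm_pos_iff hr w y).1 h
  obtain ⟨q, hq0, hq⟩ := exists_rat_btwn (abs_pos.2 hyδ)
  exact ⟨(δ, q), hwδ, hq0, hq⟩

end WeakNorm

section NormalizedSingle

variable {Γ : Type*} [DecidableEq Γ]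

/-- `e_g / ‖e_g‖`, since `‖e_g‖ = (w g) ^ (1 / p)` in `ℓ^{p,∞}(Γ, w)`. -/
noncomputable def normalizedSingle (p : ℝ) (w : Γ → ℝ) (g : Γ) : Γ → ℝ :=
  Pi.single g (w g ^ (-(1 / p)))

lemma weakNorm_normalizedSingle_pos {p : ℝ} (hp : 0 < p) {w : Γ → ℝ} {g : Γ} (hw : 0 < w g) :
    0 < weakNorm p w (normalizedSingle p w g) :=
  (weakNorm_pos_iff hp _ _).2
    ⟨g, hw, by simp [normalizedSingle, (Real.rpow_pos_of_pos hw _).ne']⟩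

lemma weakNorm_sum_smul_normalizedSingle_le {p : ℝ} (hp : 0 < p) {w : Γ → ℝ}
    (hw : ∀ γ, 0 < w γ) (t : Finset Γ) {s : Γ → ℝ} (hs : ∀ γ, |s γ| ≤ 1) :
    weakNorm p w (∑ g ∈ t, s g • normalizedSingle p w g) ≤ (t.card : ℝ≥0∞) ^ (1 / p) := by
  refine weakNorm_le_card_rpow hp w _ t fun γ hγ => ?_
  have hval : (∑ g ∈ t, s g • normalizedSingle p w g) γ
      = if γ ∈ t then s γ * w γ ^ (-(1 / p)) else 0 := by
    simp [normalizedSingle, ← Pi.single_smul', Finset.sum_apply, Finset.sum_pi_single]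
  by_cases hγt : γ ∈ t
  swap
  · simp [hval, hγt] at hγ
  rw [hval, if_pos hγt] at hγ ⊢
  have hs0 : 0 < |s γ| := abs_pos.2 (left_ne_zero_of_mul hγ)
  refine ⟨hγt, ?_⟩
  calc w γ ≤ |s γ| ^ (-p) * w γ :=
        le_mul_of_one_le_left (hw γ).le
          (Real.one_le_rpow_of_pos_of_le_one_of_nonpos hs0 (hs γ) (by linarith))
    _ = |s γ * w γ ^ (-(1 / p))| ^ (-p) := by
        rw [abs_mul, Real.mul_rpow (abs_nonneg _) (abs_nonneg _),
          abs_of_pos (Real.rpow_pos_of_pos (hw γ) _), ← Real.rpow_mul (hw γ).le,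
          show -(1 / p) * -p = 1 by field_simp, Real.rpow_one]

lemma weakNorm_normalizedSingle_le_one {p : ℝ} (hp : 0 < p) {w : Γ → ℝ} (hw : ∀ γ, 0 < w γ)
    (g : Γ) : weakNorm p w (normalizedSingle p w g) ≤ 1 := by
  simpa using weakNorm_sum_smul_normalizedSingle_le hp hw {g} (s := fun _ => 1) (by simp)

end NormalizedSingle

lemma abs_sign_le_one {α : Type*} [Ring α] [LinearOrder α] [IsStrictOrderedRing α] (x : α) :
    |(SignType.sign x : α)| ≤ 1 := by
  rcases lt_trichotomy x 0 with h | rfl | h <;> simp [*]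

lemma LinearMap.apply_sum_sign_smul {α ι E : Type*} [AddCommGroup E] [Module ℝ E]
    (T : E →ₗ[ℝ] ι → ℝ) (v : α → E) (t : Finset α) (δ : ι) :
    T (∑ g ∈ t, (SignType.sign (T (v g) δ) : ℝ) • v g) δ = ∑ g ∈ t, |T (v g) δ| := by
  simp [Finset.sum_apply, mul_comm, self_mul_sign]

lemma card_mul_le_of_lt_abs_apply_normalizedSingle {Γ₁ Γ₂ : Type*} [DecidableEq Γ₁] {p r : ℝ}
    (hp : 0 < p) (hr : 0 ≤ r) {w₁ : Γ₁ → ℝ} (hw₁ : ∀ γ, 0 < w₁ γ) (w₂ : Γ₂ → ℝ)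
    (T : (Γ₁ → ℝ) →ₗ[ℝ] (Γ₂ → ℝ)) {M : ℝ≥0∞}
    (hT : ∀ x, weakNorm p w₁ x ≠ ⊤ → weakNorm r w₂ (T x) ≤ M * weakNorm p w₁ x)
    {t : Finset Γ₁} (ht : t.Nonempty) {δ : Γ₂} {q : ℝ} (hq : 0 ≤ q)
    (hTq : ∀ g ∈ t, q < |T (normalizedSingle p w₁ g) δ|) :
    (t.card : ℝ≥0∞) * (ENNReal.ofReal q * ENNReal.ofReal (w₂ δ) ^ (1 / r))
      ≤ M * (t.card : ℝ≥0∞) ^ (1 / p) := by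
  set x := ∑ g ∈ t, (SignType.sign (T (normalizedSingle p w₁ g) δ) : ℝ) • normalizedSingle p w₁ g
  have hx : weakNorm p w₁ x ≤ (t.card : ℝ≥0∞) ^ (1 / p) :=
    weakNorm_sum_smul_normalizedSingle_le hp hw₁ t fun _ => abs_sign_le_one _
  have hTx : (t.card * q : ℝ) < |T x δ| := by
    rw [T.apply_sum_sign_smul, abs_of_nonneg (Finset.sum_nonneg fun _ _ => abs_nonneg _)]
    calc (t.card * q : ℝ) = ∑ _ ∈ t, q := by simp
      _ < ∑ g ∈ t, |T (normalizedSingle p w₁ g) δ| := Finset.sum_lt_sum_of_nonempty ht hTq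
  calc (t.card : ℝ≥0∞) * (ENNReal.ofReal q * ENNReal.ofReal (w₂ δ) ^ (1 / r))
      = ENNReal.ofReal (t.card * q) * ENNReal.ofReal (w₂ δ) ^ (1 / r) := by
        rw [ENNReal.ofReal_mul (by positivity), ENNReal.ofReal_natCast, mul_assoc]
    _ ≤ weakNorm r w₂ (T x) := ofReal_mul_rpow_le_weakNorm hr _ _ (by positivity) hTx
    _ ≤ M * weakNorm p w₁ x := hT x (ne_top_of_le_ne_top (by finiteness) hx)
    _ ≤ M * (t.card : ℝ≥0∞) ^ (1 / p) := by gcongr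

lemma exists_infinite_fiber_prod_rat {α β : Type u} (hβ : Cardinal.aleph0 ≤ Cardinal.mk β)
    (hlt : Cardinal.mk β < Cardinal.mk α) (f : α → β × ℚ) : ∃ y, (f ⁻¹' {y}).Infinite := by
  have : Infinite β := Cardinal.infinite_iff.2 hβ
  have hcard : Cardinal.mk (β × ℚ) = Cardinal.mk β := by
    rw [Cardinal.mk_prod, Cardinal.mk_denumerable ℚ, Cardinal.lift_aleph0, Cardinal.lift_uzero,
      Cardinal.mul_aleph0_eq hβ]
  obtain ⟨y, hy⟩ := Cardinal.exists_infinite_fiber' f (hcard ▸ hlt)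
  exact ⟨y, Set.infinite_coe_iff.1 hy⟩

lemma eventually_mul_rpow_lt_natCast_mul {a : ℝ} (ha : a < 1) (C : ℝ) {K : ℝ} (hK : 0 < K) :
    ∀ᶠ n : ℕ in atTop, C * (n : ℝ) ^ a < n * K := by
  have hgrowth : Tendsto (fun n : ℕ => (n : ℝ) ^ (1 - a)) atTop atTop :=
    (tendsto_rpow_atTop (sub_pos.2 ha)).comp tendsto_natCast_atTop_atTop
  filter_upwards [hgrowth.eventually_gt_atTop (C / K), eventually_gt_atTop 0] with n hn hn0
  have hn0' : (0 : ℝ) < n := by exact_mod_cast hn0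
  calc C * (n : ℝ) ^ a < ((n : ℝ) ^ (1 - a) * K) * (n : ℝ) ^ a :=
        mul_lt_mul_of_pos_right ((div_lt_iff₀ hK).1 hn) (by positivity)
    _ = n * K := by rw [mul_right_comm, ← Real.rpow_add hn0', sub_add_cancel, Real.rpow_one]

lemma ENNReal.eventually_mul_rpow_lt_natCast_mul {a : ℝ} (ha : a < 1) {M K : ℝ≥0∞}
    (hM : M ≠ ⊤) (hK₀ : K ≠ 0) (hK : K ≠ ⊤) :
    ∀ᶠ n : ℕ in atTop, M * (n : ℝ≥0∞) ^ a < n * K := by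
  filter_upwards [_root_.eventually_mul_rpow_lt_natCast_mul ha M.toReal
    (ENNReal.toReal_pos hK₀ hK), eventually_gt_atTop 0] with n hn hn0
  have hn0' : (0 : ℝ) < n := by exact_mod_cast hn0
  rwa [← ofReal_toReal hM, ← ofReal_toReal hK, ← ofReal_natCast, ofReal_rpow_of_pos hn0',
    ← ofReal_mul toReal_nonneg, ← ofReal_mul hn0'.le,
    ofReal_lt_ofReal_iff (_root_.mul_pos hn0' (toReal_pos hK₀ hK))]

theorem no_embedding_of_card_gt_general {Γ₁ Γ₂ : Type u} (p r : ℝ) (hp : 1 < p) (hr : 1 < r)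
    (hinf : Cardinal.aleph0 ≤ Cardinal.mk Γ₂) (hgt : Cardinal.mk Γ₂ < Cardinal.mk Γ₁)
    (w₁ : Γ₁ → ℝ) (hw₁ : ∀ γ, 0 < w₁ γ) (w₂ : Γ₂ → ℝ) :
    ¬ ∃ (T : (Γ₁ → ℝ) →ₗ[ℝ] (Γ₂ → ℝ)) (ε M : ℝ≥0∞), 0 < ε ∧ M ≠ ⊤ ∧
      ∀ x : Γ₁ → ℝ, weakNorm p w₁ x ≠ ⊤ →
        ε * weakNorm p w₁ x ≤ weakNorm r w₂ (T x) ∧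
        weakNorm r w₂ (T x) ≤ M * weakNorm p w₁ x := by
  classical
  rintro ⟨T, ε, M, hε, hM, hT⟩
  have hp0 : 0 < p := by linarith
  have hr0 : 0 < r := by linarith
  have hTe (g : Γ₁) : ∃ z : Γ₂ × ℚ, 0 < w₂ z.1 ∧ 0 < (z.2 : ℝ) ∧
      (z.2 : ℝ) < |T (normalizedSingle p w₁ g) z.1| := by
    have he_fin := ne_top_of_le_ne_top one_ne_top (weakNorm_normalizedSingle_le_one hp0 hw₁ g)
    refine exists_rat_lt_abs_of_weakNorm_pos hr0 (lt_of_lt_of_le ?_ (hT _ he_fin).1)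
    exact ENNReal.mul_pos hε.ne' (weakNorm_normalizedSingle_pos hp0 (hw₁ g)).ne'
  choose F hF using hTe
  obtain ⟨⟨δ, q⟩, hfib⟩ := exists_infinite_fiber_prod_rat hinf hgt F
  have hfibF : ∀ g ∈ F ⁻¹' {(δ, q)},
      0 < w₂ δ ∧ 0 < (q : ℝ) ∧ (q : ℝ) < |T (normalizedSingle p w₁ g) δ| :=
    fun g (hg : F g = (δ, q)) => by simpa [hg] using hF g
  obtain ⟨hwδ, hq0, -⟩ := hfibF _ hfib.nonempty.some_mem
  obtain ⟨n, hMn, hn0⟩ := ((ENNReal.eventually_mul_rpow_lt_natCast_mul ((div_lt_one hp0).2 hp) hM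
    (K := ENNReal.ofReal q * ENNReal.ofReal (w₂ δ) ^ (1 / r)) (by positivity) (by finiteness)).and
    (eventually_gt_atTop 0)).exists
  obtain ⟨t, hts, rfl⟩ := hfib.exists_subset_card_eq n
  exact hMn.not_ge <| card_mul_le_of_lt_abs_apply_normalizedSingle hp0 hr0.le hw₁ w₂ T
    (fun x hx => (hT x hx).2) (Finset.card_pos.1 hn0) hq0.le fun g hg => (hfibF g (hts hg)).2.2

/-- If `|Γ₁| > |Γ₂| ≥ ℵ₀`, then `ℓ^{p,∞}(Γ₁,w₁)` does not embed isomorphically into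
`ℓ^{r,∞}(Γ₂,w₂)` for any weights `w₁, w₂`. -/
theorem no_embedding_of_card_gt {Γ₁ Γ₂ : Type u} (p r : ℝ) (hp : 1 < p) (hr : 1 < r)
    (hinf : Cardinal.aleph0 ≤ Cardinal.mk Γ₂) (hgt : Cardinal.mk Γ₂ < Cardinal.mk Γ₁)
    (w₁ : Γ₁ → ℝ) (hw₁ : ∀ γ, 0 < w₁ γ) (w₂ : Γ₂ → ℝ) (hw₂ : ∀ γ, 0 < w₂ γ) :
    ¬ ∃ (T : (Γ₁ → ℝ) →ₗ[ℝ] (Γ₂ → ℝ)) (ε M : ℝ≥0∞), 0 < ε ∧ M ≠ ⊤ ∧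
      ∀ x : Γ₁ → ℝ, weakNorm p w₁ x ≠ ⊤ →
        ε * weakNorm p w₁ x ≤ weakNorm r w₂ (T x) ∧
        weakNorm r w₂ (T x) ≤ M * weakNorm p w₁ x :=
  no_embedding_of_card_gt_general p r hp hr hinf hgt w₁ hw₁ w₂
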